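/- arXiv:1806.11459 — 3 statements merged into one kernel-verified Lean document; each statement's English description precedes it below -/
import Mathlib

section
/- If (W, ≤) is a well-quasi-order, then the set M(W) of finite multisets over W is a well-quasi-order under the order where M ≤ N iff there is an injection p from M to N (respecting multiplicities) such that m ≤ p(m) for all m in M. -/
/-! Higman's lemma makes finite lists over a well-quasi-order well-quasi-ordered under
embedding into a subsequence, elementwise related. Listing the elements of a multiset in
any order, such an embedding of lists is an injection of occurrences that respects the
order, so the multisets inherit the property. -/

/-- The injection order on finite multisets: `M ≤ N` iff there is an injection
of the occurrences of `M` into the occurrences of `N` (i.e. a sub-multiset `N'`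
of `N` in bijective `r`-relation with `M`) relating every element of `M` to an
`r`-larger element of `N`. -/
def MultisetLE {W : Type*} (r : W → W → Prop) (M N : Multiset W) : Prop :=
  ∃ N' ≤ N, Multiset.Rel r M N'

section

variable {α : Type*} {r : α → α → Prop}

theorem List.Forall₂.multisetRel {l₁ l₂ : List α} (h : List.Forall₂ r l₁ l₂) :
    Multiset.Rel r (l₁ : Multiset α) l₂ := by
  induction h with
  | nil => exact Multiset.Rel.zero
  | cons hab _ ih => exact Multiset.Rel.cons hab ih

theorem List.SublistForall₂.multisetLE {l₁ l₂ : List α} (h : List.SublistForall₂ r l₁ l₂) :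
    MultisetLE r (l₁ : Multiset α) l₂ := by
  obtain ⟨l, hrel, hsub⟩ := List.sublistForall₂_iff.1 h
  exact ⟨l, hsub.subperm, hrel.multisetRel⟩

theorem WellQuasiOrdered.sublistForall₂ [IsPreorder α r] (h : WellQuasiOrdered r) :
    WellQuasiOrdered (List.SublistForall₂ r) := by
  rw [← Set.partiallyWellOrderedOn_univ_iff] at h ⊢
  simpa using h.partiallyWellOrderedOn_sublistForall₂ r

theorem WellQuasiOrdered.multisetLE [IsPreorder α r] (h : WellQuasiOrdered r) :
    WellQuasiOrdered (MultisetLE r) := by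
  intro g
  obtain ⟨m, n, hmn, hle⟩ := h.sublistForall₂ fun k ↦ (g k).toList
  refine ⟨m, n, hmn, ?_⟩
  simpa only [Multiset.coe_toList] using hle.multisetLE

end

/-- If `(W, ≤)` is a well-quasi-order, then the finite multisets over `W`,
under the injection order, form a well-quasi-order. -/
theorem multiset_wqo {W : Type*} [Preorder W]
    (hW : ∀ f : ℕ → W, ∃ i j : ℕ, i < j ∧ f i ≤ f j) :
    ∀ g : ℕ → Multiset W, ∃ i j : ℕ, i < j ∧ MultisetLE (· ≤ ·) (g i) (g j) :=
  WellQuasiOrdered.multisetLE (r := (· ≤ ·)) hW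
end

section
/- Let Σ be an acyclic finite multi-sorted signature with only unary function symbols and constants, and let T be a finite set of universal Σ-sentences. Then T has the finite model property for constraint satisfiability: every conjunction of literals that is satisfiable in some model of T is satisfiable in a model of T in which every sort is interpreted by a finite set. -/
universe u

/-- A multi-sorted signature whose only symbols are unary function symbols,
constants, and equality. -/
structure UnarySig where
  S : Type
  F : Type
  src : F → S
  tgt : F → S
  C : Type
  csort : C → S

/-- Edge relation of the sort dependency graph. -/
def UnarySig.Step (σ : UnarySig) (s s' : σ.S) : Prop :=
  ∃ f : σ.F, σ.src f = s ∧ σ.tgt f = s'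

/-- Acyclicity of the sort dependency graph. -/
def UnarySig.Acyclic (σ : UnarySig) : Prop :=
  ∀ s : σ.S, ¬ Relation.TransGen σ.Step s s

/-- Terms over `n` sorted variables (with sorts `vs`). -/
inductive UnarySig.Tm (σ : UnarySig) (n : ℕ) (vs : Fin n → σ.S) : σ.S → Type
  | var (i : Fin n) : σ.Tm n vs (vs i)
  | const (c : σ.C) : σ.Tm n vs (σ.csort c)
  | app (f : σ.F) (t : σ.Tm n vs (σ.src f)) : σ.Tm n vs (σ.tgt f)

/-- Quantifier-free formulae over `n` sorted variables: boolean combinations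
of equality atoms between terms of the same sort. -/
inductive UnarySig.QF (σ : UnarySig) (n : ℕ) (vs : Fin n → σ.S) : Type
  | eq {s : σ.S} (t u : σ.Tm n vs s) : σ.QF n vs
  | not (φ : σ.QF n vs) : σ.QF n vs
  | and (φ ψ : σ.QF n vs) : σ.QF n vs
  | or (φ ψ : σ.QF n vs) : σ.QF n vs

/-- A `Σ`-structure. -/
structure UnarySig.Str (σ : UnarySig) : Type (u + 1) where
  carrier : σ.S → Type u
  fI : ∀ f : σ.F, carrier (σ.src f) → carrier (σ.tgt f)
  cI : ∀ c : σ.C, carrier (σ.csort c)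

/-- Evaluation of terms under a valuation of the variables. -/
def UnarySig.Str.evalTm {σ : UnarySig} (M : UnarySig.Str.{u} σ) {n : ℕ} {vs : Fin n → σ.S}
    (v : ∀ i : Fin n, M.carrier (vs i)) : ∀ {s : σ.S}, σ.Tm n vs s → M.carrier s
  | _, .var i => v i
  | _, .const c => M.cI c
  | _, .app f t => M.fI f (M.evalTm v t)

/-- Satisfaction of a quantifier-free formula under a valuation. -/
def UnarySig.Str.Realize {σ : UnarySig} (M : UnarySig.Str.{u} σ) {n : ℕ} {vs : Fin n → σ.S}
    (v : ∀ i : Fin n, M.carrier (vs i)) : σ.QF n vs → Prop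
  | .eq t u => M.evalTm v t = M.evalTm v u
  | .not φ => ¬ M.Realize v φ
  | .and φ ψ => M.Realize v φ ∧ M.Realize v ψ
  | .or φ ψ => M.Realize v φ ∨ M.Realize v ψ

/-- A universal `Σ`-sentence `∀ x̅ φ(x̅)` with `φ` quantifier-free. -/
structure UnarySig.USent (σ : UnarySig) : Type where
  n : ℕ
  vs : Fin n → σ.S
  matrix : σ.QF n vs

/-- A structure models a universal sentence. -/
def UnarySig.Str.SatU {σ : UnarySig} (M : UnarySig.Str.{u} σ) (u' : σ.USent) : Prop :=
  ∀ v : ∀ i : Fin u'.n, M.carrier (u'.vs i), M.Realize v u'.matrix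

/-- A structure models a theory of universal sentences. -/
def UnarySig.Str.Models {σ : UnarySig} (M : UnarySig.Str.{u} σ) (T : Set σ.USent) : Prop :=
  ∀ u' ∈ T, M.SatU u'

/-- Literals and conjunctions of literals (constraints). -/
inductive UnarySig.IsConstraint {σ : UnarySig} {n : ℕ} {vs : Fin n → σ.S} :
    σ.QF n vs → Prop
  | eq {s : σ.S} (t u : σ.Tm n vs s) : UnarySig.IsConstraint (.eq t u)
  | neq {s : σ.S} (t u : σ.Tm n vs s) : UnarySig.IsConstraint (.not (.eq t u))
  | and {φ ψ : σ.QF n vs} :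
      UnarySig.IsConstraint φ → UnarySig.IsConstraint ψ → UnarySig.IsConstraint (.and φ ψ)

section Aux

variable {σ : UnarySig} {n : ℕ} {vs : Fin n → σ.S}

/-- Decoding of terms at sort `s` from a code: either a variable of sort `s`, a constant of
sort `s`, or an application of a function symbol with target `s` to a subterm. -/
def tmDecode {s : σ.S} :
    ({i : Fin n // vs i = s} ⊕ {c : σ.C // σ.csort c = s} ⊕
      (Σ f : {f : σ.F // σ.tgt f = s}, σ.Tm n vs (σ.src f.1))) → σ.Tm n vs s
  | Sum.inl ⟨i, h⟩ => h ▸ .var i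
  | Sum.inr (Sum.inl ⟨c, h⟩) => h ▸ .const c
  | Sum.inr (Sum.inr ⟨⟨f, h⟩, t⟩) => h ▸ .app f t

theorem tmDecode_surjective {s : σ.S} :
    Function.Surjective (tmDecode (σ := σ) (n := n) (vs := vs) (s := s)) := by
  intro t
  cases t with
  | var i => exact ⟨Sum.inl ⟨i, rfl⟩, rfl⟩
  | const c => exact ⟨Sum.inr (Sum.inl ⟨c, rfl⟩), rfl⟩
  | app f t => exact ⟨Sum.inr (Sum.inr ⟨⟨f, rfl⟩, t⟩), rfl⟩

theorem step_wf [Finite σ.S] (hacyc : σ.Acyclic) : WellFounded σ.Step := by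
  have : IsIrrefl σ.S (Relation.TransGen σ.Step) := ⟨hacyc⟩
  have hwf : WellFounded (Relation.TransGen σ.Step) :=
    Finite.wellFounded_of_trans_of_irrefl _
  exact Subrelation.wf (fun h => Relation.TransGen.single h) hwf

theorem tm_finite [Finite σ.S] [Finite σ.F] [Finite σ.C] (hacyc : σ.Acyclic) (s : σ.S) :
    Finite (σ.Tm n vs s) := by
  induction s using (step_wf hacyc).induction with
  | _ s ih =>
    haveI : ∀ f : {f : σ.F // σ.tgt f = s}, Finite (σ.Tm n vs (σ.src f.1)) := by
      intro f
      exact ih _ ⟨f.1, rfl, f.2⟩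
    exact Finite.of_surjective _ (tmDecode_surjective (s := s))

variable (M : UnarySig.Str.{u} σ) (v : ∀ i : Fin n, M.carrier (vs i))

/-- The setoid of terms identified by their evaluation in `M` under `v`. -/
def tmSetoid (s : σ.S) : Setoid (σ.Tm n vs s) :=
  ⟨fun t u => M.evalTm v t = M.evalTm v u, ⟨fun _ => rfl, Eq.symm, Eq.trans⟩⟩

/-- The term structure generated by the constants and the values `v i`, realized as a
quotient of the (small) type of terms. -/
def quotStr : UnarySig.Str.{0} σ where
  carrier s := Quotient (tmSetoid M v s)
  fI f := Quotient.map (.app f) (fun _ _ h => congrArg (M.fI f) h)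
  cI c := Quotient.mk _ (.const c)

/-- The embedding of the term structure into `M`. -/
def emb (s : σ.S) : (quotStr M v).carrier s → M.carrier s :=
  Quotient.lift (M.evalTm v) (fun _ _ h => h)

theorem emb_injective (s : σ.S) : Function.Injective (emb M v s) := by
  intro x y
  induction x using Quotient.ind
  induction y using Quotient.ind
  intro h
  exact Quotient.sound h

theorem emb_eval {m : ℕ} {ws : Fin m → σ.S} (w : ∀ i, (quotStr M v).carrier (ws i)) :
    ∀ {s : σ.S} (t : σ.Tm m ws s),
      emb M v s ((quotStr M v).evalTm w t) = M.evalTm (fun i => emb M v _ (w i)) t := by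
  intro s t
  induction t with
  | var i => rfl
  | const c => rfl
  | app f t ih =>
    show emb M v _ ((quotStr M v).fI f ((quotStr M v).evalTm w t)) = _
    obtain ⟨t', ht'⟩ := Quotient.exists_rep ((quotStr M v).evalTm w t)
    rw [← ht'] at ih ⊢
    show M.evalTm v (.app f t') = _
    show M.fI f (M.evalTm v t') = _
    rw [show M.evalTm v t' = _ from ih]
    rfl

theorem realize_quot {m : ℕ} {ws : Fin m → σ.S} (w : ∀ i, (quotStr M v).carrier (ws i))
    (ψ : σ.QF m ws) :
    (quotStr M v).Realize w ψ ↔ M.Realize (fun i => emb M v _ (w i)) ψ := by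
  induction ψ with
  | eq t u =>
    simp only [UnarySig.Str.Realize]
    constructor
    · intro h
      rw [← emb_eval M v w t, ← emb_eval M v w u, h]
    · intro h
      exact emb_injective M v _ (by rw [emb_eval M v w t, emb_eval M v w u, h])
  | not φ ih => exact not_congr ih
  | and φ ψ ih1 ih2 => exact and_congr ih1 ih2
  | or φ ψ ih1 ih2 => exact or_congr ih1 ih2

end Aux

/-- **Finite model property.** Let `Σ` be an acyclic finite multi-sorted
signature with only unary function symbols and constants, and `T` a finite set
of universal `Σ`-sentences.  Every constraint (conjunction of literals) that is
satisfiable in some model of `T` is satisfiable in a model of `T` in which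
every sort is interpreted by a finite set. -/
theorem finite_model_property (σ : UnarySig)
    [Fintype σ.S] [Fintype σ.F] [Fintype σ.C] (hacyc : σ.Acyclic)
    (T : Set σ.USent) (hTfin : T.Finite)
    (n : ℕ) (vs : Fin n → σ.S) (φ : σ.QF n vs) (hφ : UnarySig.IsConstraint φ)
    (hsat : ∃ (M : UnarySig.Str.{u} σ) (_ : M.Models T) (v : ∀ i : Fin n, M.carrier (vs i)),
      M.Realize v φ) :
    ∃ (N : UnarySig.Str.{0} σ) (_ : ∀ s : σ.S, Finite (N.carrier s)) (_ : N.Models T)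
      (w : ∀ i : Fin n, N.carrier (vs i)), N.Realize w φ := by
  obtain ⟨M, hM, v, hv⟩ := hsat
  refine ⟨quotStr M v, fun s => ?_, ?_, fun i => Quotient.mk _ (.var i), ?_⟩
  · haveI := tm_finite (n := n) (vs := vs) hacyc s
    exact Quotient.finite _
  · intro u' hu' w
    exact (realize_quot M v w u'.matrix).mpr (hM u' hu' _)
  · exact (realize_quot M v _ φ).mpr hv
end

section
/- Instantiation suffices for ∃∀-sentences over artifact sorts: a sentence of the form ∃e̅ (Diff(e̅) ∧ ∀i̅ φ(e̅, i̅)) — where e̅, i̅ range over sorts that occur in the structure only as arguments of unary function symbols into other sorts, equality between such elements being the only atoms involving them directly — is satisfiable in some structure if and only if the quantifier-free-in-i̅ sentence ∃e̅ (Diff(e̅) ∧ ⋀_σ φ(e̅, i̅σ)) is satisfiable, where σ ranges over all sort-respecting substitutions mapping the variables i̅ into the variables e̅. -/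
universe u

namespace InstSig

variable (AS BS Cm F : Type) (csrc : Cm → AS) (ctgt : Cm → BS)
  (fsrc ftgt : F → BS) (E : Type) (vs : E → AS) (m : ℕ) (xs : Fin m → BS)

/-- Terms of basic sorts: basic variables, artifact components applied to
artifact-sort variables, and basic unary functions applied to terms (artifact
elements occur only as arguments of the unary component symbols). -/
inductive BT : BS → Type
  | var (i : Fin m) : BT (xs i)
  | comp (c : Cm) (e : E) (h : vs e = csrc c) : BT (ctgt c)
  | app (f : F) (t : BT (fsrc f)) : BT (ftgt f)

/-- Quantifier-free formulae: boolean combinations of equalities between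
basic terms and of equalities between artifact-sort variables (the only atoms
directly involving them). -/
inductive Fm : Type
  | beq {s : BS} (t u : BT AS BS Cm F csrc ctgt fsrc ftgt E vs m xs s) : Fm
  | aeq (e e' : E) (h : vs e = vs e') : Fm
  | not (φ : Fm) : Fm
  | and (φ ψ : Fm) : Fm
  | or (φ ψ : Fm) : Fm
  | tt : Fm

/-- An interpretation of the two-level signature. -/
structure Interp : Type (u + 1) where
  A : AS → Type u
  B : BS → Type u
  cI : ∀ c : Cm, A (csrc c) → B (ctgt c)
  fI : ∀ f : F, B (fsrc f) → B (ftgt f)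

variable {AS BS Cm F csrc ctgt fsrc ftgt E vs m xs}

/-- Evaluation of basic terms. -/
def evalT (I : Interp.{u} AS BS Cm F csrc ctgt fsrc ftgt)
    (va : ∀ e : E, I.A (vs e)) (vx : ∀ i : Fin m, I.B (xs i)) :
    ∀ {s : BS}, BT AS BS Cm F csrc ctgt fsrc ftgt E vs m xs s → I.B s
  | _, .var i => vx i
  | _, .comp c e h => I.cI c (cast (congrArg I.A h) (va e))
  | _, .app f t => I.fI f (evalT I va vx t)

/-- Satisfaction of a quantifier-free formula. -/
def Realize (I : Interp.{u} AS BS Cm F csrc ctgt fsrc ftgt)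
    (va : ∀ e : E, I.A (vs e)) (vx : ∀ i : Fin m, I.B (xs i)) :
    Fm AS BS Cm F csrc ctgt fsrc ftgt E vs m xs → Prop
  | .beq t u => evalT I va vx t = evalT I va vx u
  | .aeq e e' h => cast (congrArg I.A h) (va e) = va e'
  | .not φ => ¬ Realize I va vx φ
  | .and φ ψ => Realize I va vx φ ∧ Realize I va vx ψ
  | .or φ ψ => Realize I va vx φ ∨ Realize I va vx ψ
  | .tt => True

end InstSig

open InstSig

/-- Pairwise distinctness (`Diff(e̅)`) of the values of same-sort existential
variables. -/
def Distinct {AS : Type} {k : ℕ} {esorts : Fin k → AS} {A : AS → Type u}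
    (ve : ∀ p : Fin k, A (esorts p)) : Prop :=
  ∀ p q : Fin k, p ≠ q → ∀ h : esorts p = esorts q,
    cast (congrArg A h) (ve p) ≠ ve q

/-- Combine valuations of the `e̅` and `i̅` variables. -/
def combine {AS : Type} {k l : ℕ} {esorts : Fin k → AS} {isorts : Fin l → AS}
    {A : AS → Type u} (ve : ∀ p : Fin k, A (esorts p))
    (vi : ∀ j : Fin l, A (isorts j)) :
    ∀ v : Fin k ⊕ Fin l, A (Sum.elim esorts isorts v)
  | .inl p => ve p
  | .inr j => vi j


/-! Only the right-to-left direction has content. Cutting the artifact carriers of a model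
down to the values of `e̅` yields a substructure, and embeddings preserve quantifier-free
formulas, so `Diff(e̅)` and the instances still hold there. In the substructure every
assignment of the `i̅` is of the form `i̅σ`, so the instances cover all of `∀i̅ φ`. -/

namespace InstSig

variable {AS BS Cm F : Type} {csrc : Cm → AS} {ctgt : Cm → BS}
  {fsrc ftgt : F → BS} {E : Type} {vs : E → AS} {m : ℕ} {xs : Fin m → BS}

theorem cast_congrArg_map {S : Type} {A : S → Sort*} {B : S → Sort*}
    (f : ∀ s, A s → B s) {s s' : S} (h : s = s') (a : A s) :
    cast (congrArg B h) (f s a) = f s' (cast (congrArg A h) a) := by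
  subst h; rfl

namespace Interp

structure Embedding (I : Interp.{u} AS BS Cm F csrc ctgt fsrc ftgt)
    (J : Interp.{v} AS BS Cm F csrc ctgt fsrc ftgt) where
  toFunA : ∀ s, I.A s → J.A s
  toFunB : ∀ s, I.B s → J.B s
  injective_toFunA : ∀ s, Function.Injective (toFunA s)
  injective_toFunB : ∀ s, Function.Injective (toFunB s)
  map_cI : ∀ c a, toFunB (ctgt c) (I.cI c a) = J.cI c (toFunA (csrc c) a)
  map_fI : ∀ f b, toFunB (ftgt f) (I.fI f b) = J.fI f (toFunB (fsrc f) b)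

namespace Embedding

variable {I : Interp.{u} AS BS Cm F csrc ctgt fsrc ftgt}
  {J : Interp.{v} AS BS Cm F csrc ctgt fsrc ftgt} (ι : I.Embedding J)
  (va : ∀ e : E, I.A (vs e)) (vx : ∀ i : Fin m, I.B (xs i))

theorem evalT_map :
    ∀ {s : BS} (t : BT AS BS Cm F csrc ctgt fsrc ftgt E vs m xs s),
      evalT J (fun e => ι.toFunA _ (va e)) (fun i => ι.toFunB _ (vx i)) t =
        ι.toFunB s (evalT I va vx t)
  | _, .var _ => rfl
  | _, .comp c e h => by
      simp only [evalT, ι.map_cI]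
      rw [cast_congrArg_map ι.toFunA h]
  | _, .app f t => by
      simp only [evalT, ι.map_fI, evalT_map t]

theorem realize_map :
    ∀ φ : Fm AS BS Cm F csrc ctgt fsrc ftgt E vs m xs,
      Realize J (fun e => ι.toFunA _ (va e)) (fun i => ι.toFunB _ (vx i)) φ ↔
        Realize I va vx φ
  | .beq t u => by
      simp only [Realize, evalT_map, (ι.injective_toFunB _).eq_iff]
  | .aeq e e' h => by
      simp only [Realize]
      rw [cast_congrArg_map ι.toFunA h, (ι.injective_toFunA _).eq_iff]
  | .not φ => by simp only [Realize, realize_map φ]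
  | .and φ ψ => by simp only [Realize, realize_map φ, realize_map ψ]
  | .or φ ψ => by simp only [Realize, realize_map φ, realize_map ψ]
  | .tt => Iff.rfl

end Embedding

/-- Any choice of `P` gives a substructure, since no function symbol takes values in an
artifact sort. -/
def restrictA (I : Interp.{u} AS BS Cm F csrc ctgt fsrc ftgt) (P : ∀ s, Set (I.A s)) :
    Interp.{u} AS BS Cm F csrc ctgt fsrc ftgt where
  A s := P s
  B := I.B
  cI c a := I.cI c a.1
  fI := I.fI

def restrictAEmbedding (I : Interp.{u} AS BS Cm F csrc ctgt fsrc ftgt)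
    (P : ∀ s, Set (I.A s)) : (I.restrictA P).Embedding I where
  toFunA _ := Subtype.val
  toFunB _ := id
  injective_toFunA _ := Subtype.val_injective
  injective_toFunB _ := Function.injective_id
  map_cI _ _ := rfl
  map_fI _ _ := rfl

end Interp

end InstSig

open InstSig

theorem Distinct.of_map {S : Type} {k : ℕ} {esorts : Fin k → S} {A : S → Type u}
    {B : S → Type v} (f : ∀ s, A s → B s) {ve : ∀ p : Fin k, A (esorts p)}
    (h : Distinct fun p => f (esorts p) (ve p)) : Distinct ve := by
  intro p q hpq hs heq
  exact h p q hpq hs (by rw [cast_congrArg_map f hs, heq])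

def namedBy {S : Type} {k : ℕ} {esorts : Fin k → S} {A : S → Type u}
    (ve : ∀ p : Fin k, A (esorts p)) (s : S) : Set (A s) :=
  {a | ∃ (p : Fin k) (h : esorts p = s), cast (congrArg A h) (ve p) = a}

/-- **Instantiation suffices for `∃∀`-sentences over artifact sorts.** A
sentence `∃e̅ (Diff(e̅) ∧ ∀i̅ φ(e̅, i̅))` — where `e̅, i̅` range over sorts
that occur only as arguments of unary function symbols into basic sorts,
equality between such elements being the only atoms directly involving them —
is satisfiable in some interpretation iff the sentence obtained by replacing
`∀i̅ φ` with the conjunction of the instances `φ(e̅, i̅σ)` over all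
sort-respecting substitutions `σ` mapping the `i̅` into the `e̅` is
satisfiable. -/
theorem instantiation_suffices_exists_forall
    (AS BS Cm F : Type) (csrc : Cm → AS) (ctgt : Cm → BS) (fsrc ftgt : F → BS)
    (k l : ℕ) (esorts : Fin k → AS) (isorts : Fin l → AS)
    (m : ℕ) (xs : Fin m → BS)
    (φ : Fm AS BS Cm F csrc ctgt fsrc ftgt (Fin k ⊕ Fin l)
      (Sum.elim esorts isorts) m xs) :
    (∃ (I : Interp.{u} AS BS Cm F csrc ctgt fsrc ftgt)
       (ve : ∀ p : Fin k, I.A (esorts p)) (vx : ∀ i : Fin m, I.B (xs i)),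
       Distinct ve ∧
         ∀ vi : ∀ j : Fin l, I.A (isorts j), Realize I (combine ve vi) vx φ) ↔
    (∃ (I : Interp.{u} AS BS Cm F csrc ctgt fsrc ftgt)
       (ve : ∀ p : Fin k, I.A (esorts p)) (vx : ∀ i : Fin m, I.B (xs i)),
       Distinct ve ∧
         ∀ (σ : Fin l → Fin k) (hσ : ∀ j : Fin l, isorts j = esorts (σ j)),
           Realize I
             (combine ve (fun j => cast (congrArg I.A (hσ j).symm) (ve (σ j))))
             vx φ) := by
  refine ⟨fun ⟨I, ve, vx, hd, hall⟩ => ⟨I, ve, vx, hd, fun σ hσ => hall _⟩, ?_⟩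
  rintro ⟨I, ve, vx, hd, hinst⟩
  let ι := I.restrictAEmbedding (namedBy ve)
  let ve' : ∀ p, (I.restrictA (namedBy ve)).A (esorts p) := fun p => ⟨ve p, p, rfl, rfl⟩
  refine ⟨_, ve', vx, Distinct.of_map ι.toFunA hd, fun vi => ?_⟩
  choose σ hσ hval using fun j => (vi j).2
  have hcombine : (fun v => ι.toFunA _ (combine ve' vi v)) =
      combine ve (fun j => cast (congrArg I.A (hσ j)) (ve (σ j))) := by
    funext v
    rcases v with p | j
    · rfl
    · exact (hval j).symm
  rw [← ι.realize_map _ vx, hcombine]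
  exact hinst σ fun j => (hσ j).symm
end
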